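/- arXiv:2505.19160 — 6 statements merged into one kernel-verified Lean document; each statement's English description precedes it below -/
import Mathlib

section
/- Let M > 0, α ∈ (0,1], and let f = h + conj(g) be harmonic in the unit disk with h(z) = z + Σ_{n≥2} a_n z^n and g(z) = Σ_{n≥2} b_n z^n analytic in D, satisfying |(1-α)h'(z) + αz h''(z) - (1-α)| ≤ M - |(1-α)g'(z) + αz g''(z)| for all z ∈ D. Then for every n ≥ 2, |a_n| ≤ M/(n + (n²-2n)α) and |b_n| ≤ M/(n + (n²-2n)α). -/
open Metric Complex FormalMultilinearSeries Filter

private lemma aux_mem_ball (y : ℂ) (hy : y ∈ Metric.eball (0:ℂ) 1) : y ∈ ball (0:ℂ) 1 := by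
  rw [mem_emetric_ball_zero_iff, enorm_eq_nnnorm] at hy
  rw [mem_ball_zero_iff]
  exact_mod_cast hy

private lemma aux_mem_ball' (y : ℂ) (hy : y ∈ ball (0:ℂ) 1) : y ∈ Metric.eball (0:ℂ) 1 := by
  rw [mem_ball_zero_iff] at hy
  rw [mem_emetric_ball_zero_iff, enorm_eq_nnnorm]
  exact_mod_cast hy

private lemma aux_hasFPSB (κ : ℕ → ℂ) (f : ℂ → ℂ)
    (H : ∀ y ∈ ball (0:ℂ) 1, HasSum (fun m => κ m * y ^ m) (f y)) :
    HasFPowerSeriesOnBall f (ofScalars ℂ κ) 0 1 := by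
  constructor
  · apply ENNReal.le_of_forall_nnreal_lt
    intro r hr
    have hr1 : (r : ℝ) < 1 := by exact_mod_cast hr
    have hy : ((r : ℝ) : ℂ) ∈ ball (0:ℂ) 1 := by
      rw [mem_ball_zero_iff]
      simpa [Complex.norm_real, Real.norm_eq_abs, _root_.abs_of_nonneg r.2] using hr1
    have h1 := ((H _ hy).summable.tendsto_atTop_zero).norm
    apply FormalMultilinearSeries.le_radius_of_tendsto (l := 0)
    rw [show (0:ℝ) = ‖(0:ℂ)‖ by simp]
    convert h1 using 2 with m
    rw [ofScalars_norm, norm_mul, norm_pow, Complex.norm_real, Real.norm_eq_abs,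
      NNReal.abs_eq]
  · exact one_pos
  · intro y hy
    rw [zero_add]
    have e : (fun n => (ofScalars ℂ κ n) fun _ => y) = fun n => κ n * y ^ n := by
      funext n; rw [ofScalars_apply_eq, smul_eq_mul]
    rw [e]
    exact H y (aux_mem_ball y hy)

private lemma aux_deriv (κ : ℕ → ℂ) (f : ℂ → ℂ)
    (hp : HasFPowerSeriesOnBall f (ofScalars ℂ κ) 0 1) :
    ∀ y ∈ ball (0:ℂ) 1,
      HasSum (fun (m : ℕ) => ((m : ℂ) + 1) * κ (m + 1) * y ^ m) (deriv f y) := by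
  intro y hy
  have h1 := hp.fderiv.hasSum (aux_mem_ball' y hy)
  have h2 := (ContinuousLinearMap.apply ℂ ℂ (1:ℂ)).hasSum h1
  simp only [ContinuousLinearMap.apply_apply, zero_add] at h2
  rw [fderiv_apply_one_eq_deriv] at h2
  have he : (fun (m : ℕ) => ((m : ℂ) + 1) * κ (m + 1) * y ^ m)
      = fun m => ((ofScalars ℂ κ).derivSeries m fun _ => y) 1 := by
    funext m
    rcases eq_or_ne y 0 with rfl | hy0
    · rcases m with _ | m
      · have he0 : (fun _ : Fin 0 => (0:ℂ)) = (fun _ : Fin 0 => (1:ℂ)) := by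
          funext i; exact i.elim0
        rw [he0, (ofScalars ℂ κ).derivSeries_apply_diag 0 (1:ℂ), ofScalars_apply_eq]
        simp
      · rw [((ofScalars ℂ κ).derivSeries (m+1)).map_coord_zero (0 : Fin (m+1)) rfl]
        simp
    · have hd := (ofScalars ℂ κ).derivSeries_apply_diag m y
      set c := (ofScalars ℂ κ).derivSeries m (fun _ => y) with hc
      have hcy : c y = y * c 1 := by
        have : c (y • (1:ℂ)) = y • c 1 := c.map_smul y 1
        simpa [smul_eq_mul] using this
      have hval : c y = ((m:ℂ) + 1) * κ (m+1) * y ^ m * y := by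
        rw [hd, ofScalars_apply_eq, smul_eq_mul, nsmul_eq_mul]
        push_cast
        ring
      refine (mul_left_cancel₀ hy0 ?_).symm
      rw [← hcy, hval]; ring
  rw [he]
  exact h2

private lemma aux_limit (t M : ℝ) (k : ℕ)
    (H : ∀ r : NNReal, 0 < r → (r : ℝ) < 1 → t ≤ M * ((r : ℝ)⁻¹) ^ k) : t ≤ M := by
  have htend : Filter.Tendsto (fun r : ℝ => M * (r⁻¹) ^ k) (nhdsWithin 1 (Set.Iio 1))
      (nhds (M * ((1:ℝ)⁻¹) ^ k)) := by
    apply Filter.Tendsto.mono_left _ nhdsWithin_le_nhds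
    exact (continuous_const.tendsto _).mul (((continuousAt_inv₀ one_ne_zero).pow k))
  simp only [inv_one, one_pow, mul_one] at htend
  refine ge_of_tendsto htend ?_
  filter_upwards [Ioo_mem_nhdsLT_of_mem (show (1:ℝ) ∈ Set.Ioc (1/2) 1 by norm_num)] with r hr
  have h0 : (0:ℝ) < r := lt_trans (by norm_num) hr.1
  have := H ⟨r, h0.le⟩ (by exact_mod_cast h0) hr.2
  exact this

private lemma aux_coeff_bound (M α : ℝ) (hM : 0 < M) (κ : ℕ → ℂ) (f : ℂ → ℂ) (u : ℂ)
    (Hf : ∀ y ∈ ball (0:ℂ) 1, HasSum (fun m => κ m * y ^ m) (f y))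
    (hbound : ∀ z ∈ ball (0:ℂ) 1,
      ‖(1 - (α:ℂ)) * deriv f z + (α:ℂ) * z * deriv (deriv f) z - u‖ ≤ M)
    (k : ℕ) (hk : 1 ≤ k) :
    ‖((1 - (α:ℂ)) * ((k:ℂ)+1) + (α:ℂ) * k * ((k:ℂ)+1)) * κ (k+1)‖ ≤ M := by
  have hp := aux_hasFPSB κ f Hf
  set κ1 : ℕ → ℂ := fun m => ((m:ℂ)+1) * κ (m+1) with hκ1
  have D1 := aux_deriv κ f hp
  have hp1 := aux_hasFPSB κ1 (deriv f) D1
  have D2 := aux_deriv κ1 (deriv f) hp1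
  set Ff : ℂ → ℂ := fun z =>
    (1 - (α:ℂ)) * deriv f z + (α:ℂ) * z * deriv (deriv f) z - u with hFf
  set Fc : ℕ → ℂ := fun m =>
    ((1-(α:ℂ))*((m:ℂ)+1) + (α:ℂ)*m*((m:ℂ)+1)) * κ (m+1) - (if m = 0 then u else 0) with hFc
  have HF : ∀ y ∈ ball (0:ℂ) 1, HasSum (fun m => Fc m * y ^ m) (Ff y) := by
    intro y hy
    have S1 := (D1 y hy).mul_left (1 - (α:ℂ))
    have S2' := (D2 y hy).mul_left ((α:ℂ) * y)
    set G : ℕ → ℂ := fun m => (α:ℂ) * m * ((m:ℂ)+1) * κ (m+1) * y^m with hG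
    have hGs : HasSum (fun m => G (m+1))
        ((α:ℂ) * y * deriv (deriv f) y - ∑ i ∈ Finset.range 1, G i) := by
      have e1 : (fun m : ℕ => G (m+1))
          = fun m : ℕ => (α:ℂ) * y * (((m:ℂ)+1) * κ1 (m+1) * y ^ m) := by
        funext m
        simp only [hG, hκ1]
        push_cast
        ring
      have e2 : (α:ℂ) * y * deriv (deriv f) y - ∑ i ∈ Finset.range 1, G i
          = (α:ℂ) * y * deriv (deriv f) y := by
        simp [hG]
      rw [e1, e2]
      exact S2'
    have S2 := (hasSum_nat_add_iff' 1).mp hGs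
    have S3 : HasSum (fun m : ℕ => (if m = 0 then u else 0) * y ^ m) u := by
      have e : (fun m : ℕ => (if m = 0 then u else 0) * y ^ m)
          = fun m => if m = 0 then u else 0 := by
        funext m; rcases eq_or_ne m 0 with rfl | hm
        · simp
        · simp [hm]
      rw [e]; exact hasSum_ite_eq 0 u
    have hsum := (S1.add S2).sub S3
    have ef : (fun m : ℕ => (1-(α:ℂ)) * (((m:ℂ)+1) * κ (m+1) * y ^ m) + G m
        - (if m = 0 then u else 0) * y ^ m) = fun m => Fc m * y ^ m := by
      funext m
      simp only [hG, hFc]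
      ring
    rw [ef] at hsum
    exact hsum
  have hpF := aux_hasFPSB Fc Ff HF
  have key : ∀ r : NNReal, 0 < r → (r:ℝ) < 1 → ‖Fc k‖ ≤ M * ((r:ℝ)⁻¹) ^ k := by
    intro r hr0 hr1
    have hsub : closedBall (0:ℂ) r ⊆ Metric.eball (0:ℂ) 1 := by
      intro z hz
      rw [mem_closedBall_zero_iff] at hz
      exact aux_mem_ball' z (by rw [mem_ball_zero_iff]; exact lt_of_le_of_lt hz hr1)
    have hdiff : DifferentiableOn ℂ Ff (closedBall (0:ℂ) r) :=
      hpF.differentiableOn.mono hsub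
    have hC := hdiff.hasFPowerSeriesOnBall hr0
    have heq : ofScalars ℂ Fc = cauchyPowerSeries Ff 0 r :=
      hpF.hasFPowerSeriesAt.eq_formalMultilinearSeries hC.hasFPowerSeriesAt
    have hb : ∀ θ ∈ Set.uIoc (0:ℝ) (2*Real.pi), ‖‖Ff (circleMap 0 r θ)‖‖ ≤ M := by
      intro θ _
      rw [Real.norm_eq_abs, _root_.abs_of_nonneg (norm_nonneg _)]
      apply hbound
      rw [mem_ball_zero_iff, norm_circleMap_zero]
      rwa [NNReal.abs_eq]
    have hI : (∫ θ in (0:ℝ)..2*Real.pi, ‖Ff (circleMap 0 r θ)‖) ≤ M * (2*Real.pi) := by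
      have h1 := intervalIntegral.norm_integral_le_of_norm_le_const (C := M) hb
      have h2 : |2*Real.pi - 0| = 2*Real.pi := by
        rw [sub_zero]; exact _root_.abs_of_nonneg (by positivity)
      rw [h2] at h1
      exact le_trans (le_abs_self _) (by rwa [Real.norm_eq_abs] at h1)
    have hcn := norm_cauchyPowerSeries_le Ff 0 (r:ℝ) k
    have h3 : ‖Fc k‖ = ‖cauchyPowerSeries Ff 0 r k‖ := by
      rw [← heq, ofScalars_norm]
    rw [h3]
    refine le_trans hcn ?_
    rw [NNReal.abs_eq]
    have hpos : (0:ℝ) ≤ ((r:ℝ)⁻¹) ^ k := by positivity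
    have h4 : (2*Real.pi)⁻¹ * (∫ θ in (0:ℝ)..2*Real.pi, ‖Ff (circleMap 0 r θ)‖) ≤ M := by
      rw [inv_mul_le_iff₀ (by positivity)]
      linarith [hI]
    exact mul_le_mul_of_nonneg_right h4 hpos
  have hfin : ‖Fc k‖ ≤ M := aux_limit _ _ _ key
  have hFck : Fc k = ((1 - (α:ℂ)) * ((k:ℂ)+1) + (α:ℂ) * k * ((k:ℂ)+1)) * κ (k+1) := by
    have hk0 : k ≠ 0 := by omega
    simp [hFc, hk0]
  rwa [hFck] at hfin

theorem stmt_0 (M α : ℝ) (hM : 0 < M) (hα0 : 0 < α) (hα1 : α ≤ 1)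
    (a b : ℕ → ℂ) (h g : ℂ → ℂ)
    (ha0 : a 0 = 0) (ha1 : a 1 = 1) (hb0 : b 0 = 0) (hb1 : b 1 = 0)
    (hh : ∀ z ∈ ball (0:ℂ) 1, HasSum (fun n => a n * z ^ n) (h z))
    (hg : ∀ z ∈ ball (0:ℂ) 1, HasSum (fun n => b n * z ^ n) (g z))
    (hhd : AnalyticOn ℂ h (ball (0:ℂ) 1))
    (hgd : AnalyticOn ℂ g (ball (0:ℂ) 1))
    (hcl : ∀ z ∈ ball (0:ℂ) 1,
      ‖(1 - (α:ℂ)) * deriv h z + (α:ℂ) * z * deriv (deriv h) z - (1 - (α:ℂ))‖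
        ≤ M - ‖(1 - (α:ℂ)) * deriv g z + (α:ℂ) * z * deriv (deriv g) z‖) :
    ∀ n : ℕ, 2 ≤ n →
      ‖a n‖ ≤ M / ((n : ℝ) + ((n:ℝ)^2 - 2*(n:ℝ)) * α) ∧
      ‖b n‖ ≤ M / ((n : ℝ) + ((n:ℝ)^2 - 2*(n:ℝ)) * α) := by
  intro n hn
  set β : ℝ := (n : ℝ) + ((n:ℝ)^2 - 2*(n:ℝ)) * α with hβ
  have h2 : (2:ℝ) ≤ (n:ℝ) := by exact_mod_cast hn
  have hβpos : 0 < β := by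
    have hx : (0:ℝ) ≤ (n:ℝ) * ((n:ℝ) - 2) := mul_nonneg (by linarith) (by linarith)
    have hnn : (0:ℝ) ≤ ((n:ℝ)^2 - 2*(n:ℝ)) * α := mul_nonneg (by nlinarith) hα0.le
    nlinarith
  have hk : 1 ≤ n - 1 := by omega
  have hkn : n - 1 + 1 = n := by omega
  have hcast : ((1 - (α:ℂ)) * ((↑(n-1):ℂ)+1) + (α:ℂ) * ↑(n-1) * ((↑(n-1):ℂ)+1)) = (β : ℂ) := by
    have hc1 : ((n-1 : ℕ) : ℂ) = (n : ℂ) - 1 := by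
      push_cast [Nat.cast_sub (by omega : 1 ≤ n)]; ring
    rw [hc1, hβ]; push_cast; ring
  constructor
  · have hbound : ∀ z ∈ ball (0:ℂ) 1,
        ‖(1-(α:ℂ))*deriv h z + (α:ℂ)*z*deriv (deriv h) z - (1-(α:ℂ))‖ ≤ M := by
      intro z hz
      have := hcl z hz
      have := norm_nonneg ((1-(α:ℂ))*deriv g z + (α:ℂ)*z*deriv (deriv g) z)
      linarith
    have hbd := aux_coeff_bound M α hM a h (1-(α:ℂ)) hh hbound (n-1) hk
    rw [hkn, hcast, norm_mul, Complex.norm_real, Real.norm_eq_abs,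
      _root_.abs_of_nonneg hβpos.le] at hbd
    rw [le_div_iff₀ hβpos]
    linarith
  · have hbound : ∀ z ∈ ball (0:ℂ) 1,
        ‖(1-(α:ℂ))*deriv g z + (α:ℂ)*z*deriv (deriv g) z - 0‖ ≤ M := by
      intro z hz
      rw [sub_zero]
      have := hcl z hz
      have := norm_nonneg ((1-(α:ℂ))*deriv h z + (α:ℂ)*z*deriv (deriv h) z - (1-(α:ℂ)))
      linarith
    have hbd := aux_coeff_bound M α hM b g 0 hg hbound (n-1) hk
    rw [hkn, hcast, norm_mul, Complex.norm_real, Real.norm_eq_abs,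
      _root_.abs_of_nonneg hβpos.le] at hbd
    rw [le_div_iff₀ hβpos]
    linarith
end

section
/- Let M > 0, α ∈ (0,1], and f = h + conj(g) ∈ D⁰_H(α,M). Then for all z in the unit disk, |z| - M|z|²/2 ≤ |f(z)| ≤ |z| + M|z|²/2. -/
open Metric Complex MeasureTheory intervalIntegral Set

private lemma memball_aux {z : ℂ} (hz : z ∈ ball (0:ℂ) 1) {t : ℝ} (ht0 : 0 ≤ t) (ht1 : t ≤ 1) :
    ((t:ℂ) * z) ∈ ball (0:ℂ) 1 := by
  rw [mem_ball_zero_iff] at hz ⊢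
  rw [norm_mul, Complex.norm_real, Real.norm_eq_abs, _root_.abs_of_nonneg ht0]
  nlinarith [norm_nonneg z]

private lemma pairSchwarz {P Q : ℂ → ℂ} {M : ℝ}
    (hP : DifferentiableOn ℂ P (ball 0 1)) (hQ : DifferentiableOn ℂ Q (ball 0 1))
    (hP0 : P 0 = 0) (hQ0 : Q 0 = 0)
    (hb : ∀ z ∈ ball (0:ℂ) 1, ‖P z‖ + ‖Q z‖ ≤ M) :
    ∀ z ∈ ball (0:ℂ) 1, ‖P z‖ + ‖Q z‖ ≤ M * ‖z‖ := by
  intro z hz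
  refine le_of_forall_pos_le_add fun ε hε => ?_
  set lam : ℂ := if P z = 0 then 1 else (‖P z‖ : ℂ) / P z with hlam
  set mu : ℂ := if Q z = 0 then 1 else (‖Q z‖ : ℂ) / Q z with hmu
  have hlam1 : ‖lam‖ = 1 := by
    rw [hlam]; split_ifs with hh
    · simp
    · rw [norm_div, Complex.norm_real, norm_norm, div_self (norm_ne_zero_iff.2 hh)]
  have hmu1 : ‖mu‖ = 1 := by
    rw [hmu]; split_ifs with hh
    · simp
    · rw [norm_div, Complex.norm_real, norm_norm, div_self (norm_ne_zero_iff.2 hh)]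
  have hlamP : lam * P z = (‖P z‖ : ℂ) := by
    rw [hlam]; split_ifs with hh
    · simp [hh]
    · field_simp
  have hmuQ : mu * Q z = (‖Q z‖ : ℂ) := by
    rw [hmu]; split_ifs with hh
    · simp [hh]
    · field_simp
  set F : ℂ → ℂ := fun w => lam * P w + mu * Q w with hF
  have hFd : DifferentiableOn ℂ F (ball 0 1) :=
    ((hP.const_mul lam).add (hQ.const_mul mu))
  have hF0 : F 0 = 0 := by simp [hF, hP0, hQ0]
  have hmaps : MapsTo F (ball 0 1) (ball (F 0) (M + ε)) := by
    rw [hF0]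
    intro w hw
    rw [mem_ball_zero_iff]
    calc ‖F w‖ ≤ ‖lam * P w‖ + ‖mu * Q w‖ := norm_add_le _ _
      _ = ‖P w‖ + ‖Q w‖ := by rw [norm_mul, norm_mul, hlam1, hmu1, one_mul, one_mul]
      _ ≤ M := hb w hw
      _ < M + ε := lt_add_of_pos_right _ hε
  have hdist := Complex.dist_le_div_mul_dist_of_mapsTo_ball hFd (hmaps.mono_right ball_subset_closedBall) hz
  rw [hF0, dist_zero_right, dist_zero_right, div_one] at hdist
  have hFz : ‖F z‖ = ‖P z‖ + ‖Q z‖ := by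
    rw [hF]
    simp only [hlamP, hmuQ]
    rw [← Complex.ofReal_add, Complex.norm_real, Real.norm_eq_abs,
      _root_.abs_of_nonneg (by positivity)]
  have hz1 : ‖z‖ < 1 := mem_ball_zero_iff.1 hz
  nlinarith [norm_nonneg z]

private lemma repD {D : ℂ → ℂ} (hD : AnalyticOnNhd ℂ D (ball 0 1)) (hD0 : D 0 = 0)
    {α : ℝ} (hα0 : 0 < α) (hα1 : α ≤ 1) {z : ℂ} (hz : z ∈ ball (0:ℂ) 1)
    {C : ℝ} (hC0 : 0 ≤ C)
    (hC : ∀ w ∈ ball (0:ℂ) 1,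
      ‖(1-(α:ℂ)) * D w + (α:ℂ) * w * deriv D w‖ ≤ C * ‖w‖) :
    D z = (∫ t in (0:ℝ)..1, (((t ^ ((1-α)/α - 1) / α : ℝ)) : ℂ) *
        ((1-(α:ℂ)) * D ((t:ℂ)*z) + (α:ℂ) * ((t:ℂ)*z) * deriv D ((t:ℂ)*z))) ∧
      IntervalIntegrable (fun t : ℝ => (((t ^ ((1-α)/α - 1) / α : ℝ)) : ℂ) *
        ((1-(α:ℂ)) * D ((t:ℂ)*z) + (α:ℂ) * ((t:ℂ)*z) * deriv D ((t:ℂ)*z))) volume 0 1 := by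
  set β : ℝ := (1-α)/α with hβ
  have hβ0 : 0 ≤ β := div_nonneg (by linarith) hα0.le
  have hαβ : α * β = 1 - α := by rw [hβ]; field_simp
  set P : ℂ → ℂ := fun w => (1-(α:ℂ)) * D w + (α:ℂ) * w * deriv D w with hP
  set F : ℝ → ℂ := fun t => (((t ^ (β - 1) / α : ℝ)) : ℂ) * P ((t:ℂ)*z) with hFdef
  set H : ℝ → ℂ := fun t => ((t ^ β : ℝ) : ℂ) * D ((t:ℂ)*z) with hHdef
  have hDc : ContinuousOn D (ball (0:ℂ) 1) := hD.continuousOn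
  have hD'c : ContinuousOn (deriv D) (ball (0:ℂ) 1) := hD.deriv.continuousOn
  have hPc : ContinuousOn P (ball (0:ℂ) 1) := by
    apply ((continuousOn_const.mul hDc).add
      ((continuousOn_const.mul continuousOn_id).mul hD'c))
  have hmapsIcc : ∀ t ∈ Icc (0:ℝ) 1, ((t:ℂ)*z) ∈ ball (0:ℂ) 1 :=
    fun t ht => memball_aux hz ht.1 ht.2
  have hlin : Continuous (fun t : ℝ => (t:ℂ)*z) :=
    Complex.continuous_ofReal.mul continuous_const
  -- continuity of H on Icc
  have hHc : ContinuousOn H (Icc 0 1) := by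
    apply ContinuousOn.mul
    · apply Continuous.continuousOn
      apply Complex.continuous_ofReal.comp
      exact continuous_iff_continuousAt.2 fun x => Real.continuousAt_rpow_const x β (Or.inr hβ0)
    · exact hDc.comp hlin.continuousOn hmapsIcc
  -- derivative of H on Ioo
  have hHd : ∀ t ∈ Ioo (0:ℝ) 1, HasDerivAt H (F t) t := by
    intro t ht
    have ht0 : t ≠ 0 := ht.1.ne'
    have htz : ((t:ℂ)*z) ∈ ball (0:ℂ) 1 := hmapsIcc t ⟨ht.1.le, ht.2.le⟩
    have h1 : HasDerivAt (fun s : ℝ => ((s ^ β : ℝ) : ℂ)) ((β * t ^ (β-1) : ℝ) : ℂ) t :=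
      (Real.hasDerivAt_rpow_const (Or.inl ht0)).ofReal_comp
    have hDat : HasDerivAt D (deriv D ((t:ℂ)*z)) ((t:ℂ)*z) :=
      (hD _ htz).differentiableAt.hasDerivAt
    have h2 : HasDerivAt (fun s : ℝ => D ((s:ℂ)*z)) (deriv D ((t:ℂ)*z) * z) t :=
      (hDat.comp (t:ℂ) (hasDerivAt_mul_const z)).comp_ofReal
    have h3 : HasDerivAt H (((β * t ^ (β-1) : ℝ) : ℂ) * D ((t:ℂ)*z) + ((t ^ β : ℝ) : ℂ) * (deriv D ((t:ℂ)*z) * z)) t := h1.mul h2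
    convert h3 using 1
    have hrp : (t:ℝ) ^ β = t ^ (β - 1) * t := by
      rw [← Real.rpow_add_one ht0]; ring_nf
    have hca : (1 : ℂ) - (α:ℝ) = ((α:ℝ):ℂ) * ((β:ℝ):ℂ) := by
      rw [← Complex.ofReal_mul, hαβ]; push_cast; ring
    rw [hFdef]
    simp only [hP]
    rw [hca, hrp]
    push_cast
    have hαne : ((α:ℝ):ℂ) ≠ 0 := Complex.ofReal_ne_zero.2 hα0.ne'
    field_simp
  -- integrability of F
  have hFb : ∀ t ∈ Ioc (0:ℝ) 1, ‖F t‖ ≤ C / α := by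
    intro t ht
    have htz : ((t:ℂ)*z) ∈ ball (0:ℂ) 1 := hmapsIcc t ⟨ht.1.le, ht.2⟩
    have hnz : ‖(t:ℂ)*z‖ = t * ‖z‖ := by
      rw [norm_mul, Complex.norm_real, Real.norm_eq_abs, _root_.abs_of_nonneg ht.1.le]
    have h1 : ‖F t‖ = t ^ (β-1) / α * ‖P ((t:ℂ)*z)‖ := by
      rw [hFdef]
      rw [norm_mul, Complex.norm_real, Real.norm_eq_abs, _root_.abs_of_nonneg
        (div_nonneg (Real.rpow_nonneg ht.1.le _) hα0.le)]
    rw [h1]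
    have h2 : ‖P ((t:ℂ)*z)‖ ≤ C * (t * ‖z‖) := by
      rw [← hnz]; exact hC _ htz
    have hz1 : ‖z‖ < 1 := mem_ball_zero_iff.1 hz
    have h3 : t ^ (β-1) / α * ‖P ((t:ℂ)*z)‖ ≤ t ^ (β-1) / α * (C * (t * ‖z‖)) := by
      apply mul_le_mul_of_nonneg_left h2
      exact div_nonneg (Real.rpow_nonneg ht.1.le _) hα0.le
    have h4 : t ^ (β-1) * t = t ^ β := by
      rw [← Real.rpow_add_one ht.1.ne']; ring_nf
    have h5 : t ^ β ≤ 1 := Real.rpow_le_one ht.1.le ht.2 hβ0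
    calc t ^ (β-1) / α * ‖P ((t:ℂ)*z)‖ ≤ t ^ (β-1) / α * (C * (t * ‖z‖)) := h3
      _ = (C / α) * (t ^ β) * ‖z‖ := by rw [← h4]; ring
      _ ≤ (C / α) * 1 * 1 := by
          apply mul_le_mul
          · exact mul_le_mul_of_nonneg_left h5 (div_nonneg hC0 hα0.le)
          · exact hz1.le
          · exact norm_nonneg z
          · positivity
      _ = C / α := by ring
  have hFc : ContinuousOn F (Ioc (0:ℝ) 1) := by
    apply ContinuousOn.mul
    · apply Complex.continuous_ofReal.comp_continuousOn
      apply ContinuousOn.div_const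
      exact fun x hx => (Real.continuousAt_rpow_const x (β-1) (Or.inl hx.1.ne')).continuousWithinAt
    · exact hPc.comp hlin.continuousOn (fun t ht => hmapsIcc t ⟨ht.1.le, ht.2⟩)
  have hFint : IntervalIntegrable F volume 0 1 := by
    rw [intervalIntegrable_iff_integrableOn_Ioc_of_le zero_le_one]
    apply Integrable.mono' (g := fun _ => C / α)
    · exact integrableOn_const measure_Ioc_lt_top.ne
    · exact (hFc.aestronglyMeasurable measurableSet_Ioc)
    · exact (ae_restrict_iff' measurableSet_Ioc).2 (ae_of_all _ hFb)
  refine ⟨?_, hFint⟩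
  have := integral_eq_sub_of_hasDeriv_right_of_le zero_le_one hHc
    (fun t ht => (hHd t ht).hasDerivWithinAt) hFint
  have hH1 : H 1 = D z := by
    rw [hHdef]; simp [Real.one_rpow]
  have hH0 : H 0 = 0 := by
    rw [hHdef]; simp [hD0]
  rw [hH1, hH0, sub_zero] at this
  exact this.symm

private lemma derivBound {D E : ℂ → ℂ}
    (hD : AnalyticOnNhd ℂ D (ball 0 1)) (hE : AnalyticOnNhd ℂ E (ball 0 1))
    (hD0 : D 0 = 0) (hE0 : E 0 = 0) {α M : ℝ} (hα0 : 0 < α) (hα1 : α ≤ 1) (hM0 : 0 ≤ M)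
    {z : ℂ} (hz : z ∈ ball (0:ℂ) 1)
    (hb : ∀ w ∈ ball (0:ℂ) 1,
      ‖(1-(α:ℂ)) * D w + (α:ℂ) * w * deriv D w‖ +
      ‖(1-(α:ℂ)) * E w + (α:ℂ) * w * deriv E w‖ ≤ M * ‖w‖) :
    ‖D z‖ + ‖E z‖ ≤ M * ‖z‖ := by
  set β : ℝ := (1-α)/α with hβ
  have hβ0 : 0 ≤ β := div_nonneg (by linarith) hα0.le
  have hbD : ∀ w ∈ ball (0:ℂ) 1,
      ‖(1-(α:ℂ)) * D w + (α:ℂ) * w * deriv D w‖ ≤ M * ‖w‖ := by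
    intro w hw; have := hb w hw; have := norm_nonneg ((1-(α:ℂ)) * E w + (α:ℂ) * w * deriv E w)
    linarith
  have hbE : ∀ w ∈ ball (0:ℂ) 1,
      ‖(1-(α:ℂ)) * E w + (α:ℂ) * w * deriv E w‖ ≤ M * ‖w‖ := by
    intro w hw; have := hb w hw; have := norm_nonneg ((1-(α:ℂ)) * D w + (α:ℂ) * w * deriv D w)
    linarith
  obtain ⟨hDeq, hDint⟩ := repD hD hD0 hα0 hα1 hz hM0 hbD
  obtain ⟨hEeq, hEint⟩ := repD hE hE0 hα0 hα1 hz hM0 hbE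
  set FD : ℝ → ℂ := fun t => (((t ^ ((1-α)/α - 1) / α : ℝ)) : ℂ) *
      ((1-(α:ℂ)) * D ((t:ℂ)*z) + (α:ℂ) * ((t:ℂ)*z) * deriv D ((t:ℂ)*z)) with hFD
  set FE : ℝ → ℂ := fun t => (((t ^ ((1-α)/α - 1) / α : ℝ)) : ℂ) *
      ((1-(α:ℂ)) * E ((t:ℂ)*z) + (α:ℂ) * ((t:ℂ)*z) * deriv E ((t:ℂ)*z)) with hFE
  have h1 : ‖D z‖ ≤ ∫ t in (0:ℝ)..1, ‖FD t‖ := by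
    rw [hDeq]; exact norm_integral_le_integral_norm zero_le_one
  have h2 : ‖E z‖ ≤ ∫ t in (0:ℝ)..1, ‖FE t‖ := by
    rw [hEeq]; exact norm_integral_le_integral_norm zero_le_one
  have hadd : (∫ t in (0:ℝ)..1, ‖FD t‖) + (∫ t in (0:ℝ)..1, ‖FE t‖)
      = ∫ t in (0:ℝ)..1, (‖FD t‖ + ‖FE t‖) :=
    (integral_add hDint.norm hEint.norm).symm
  have hz1 : ‖z‖ < 1 := mem_ball_zero_iff.1 hz
  -- pointwise bound on Icc
  have hpt : ∀ t ∈ Icc (0:ℝ) 1, ‖FD t‖ + ‖FE t‖ ≤ (M * ‖z‖ / α) * t ^ β := by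
    intro t ht
    rcases eq_or_lt_of_le ht.1 with h0 | h0
    · -- t = 0
      have ht0 : t = 0 := h0.symm
      subst ht0
      have : FD 0 = 0 := by
        rw [hFD]; simp [hD0]
      have h' : FE 0 = 0 := by
        rw [hFE]; simp [hE0]
      rw [this, h', norm_zero, add_zero]
      positivity
    · have htz : ((t:ℂ)*z) ∈ ball (0:ℂ) 1 := memball_aux hz ht.1 ht.2
      have hnz : ‖(t:ℂ)*z‖ = t * ‖z‖ := by
        rw [norm_mul, Complex.norm_real, Real.norm_eq_abs, _root_.abs_of_nonneg ht.1]
      have hc : (0:ℝ) ≤ t ^ (β-1) / α := div_nonneg (Real.rpow_nonneg ht.1 _) hα0.le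
      have hnFD : ‖FD t‖ = t ^ (β-1) / α *
          ‖(1-(α:ℂ)) * D ((t:ℂ)*z) + (α:ℂ) * ((t:ℂ)*z) * deriv D ((t:ℂ)*z)‖ := by
        rw [hFD, norm_mul, Complex.norm_real, Real.norm_eq_abs, _root_.abs_of_nonneg hc]
      have hnFE : ‖FE t‖ = t ^ (β-1) / α *
          ‖(1-(α:ℂ)) * E ((t:ℂ)*z) + (α:ℂ) * ((t:ℂ)*z) * deriv E ((t:ℂ)*z)‖ := by
        rw [hFE, norm_mul, Complex.norm_real, Real.norm_eq_abs, _root_.abs_of_nonneg hc]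
      have hsum := hb _ htz
      rw [hnz] at hsum
      have h4 : t ^ (β-1) * t = t ^ β := by
        rw [← Real.rpow_add_one h0.ne']; ring_nf
      calc ‖FD t‖ + ‖FE t‖
          = t ^ (β-1) / α * (‖(1-(α:ℂ)) * D ((t:ℂ)*z) + (α:ℂ) * ((t:ℂ)*z) * deriv D ((t:ℂ)*z)‖
            + ‖(1-(α:ℂ)) * E ((t:ℂ)*z) + (α:ℂ) * ((t:ℂ)*z) * deriv E ((t:ℂ)*z)‖) := by
            rw [hnFD, hnFE]; ring
        _ ≤ t ^ (β-1) / α * (M * (t * ‖z‖)) := mul_le_mul_of_nonneg_left hsum hc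
        _ = (M * ‖z‖ / α) * (t ^ (β-1) * t) := by ring
        _ = (M * ‖z‖ / α) * t ^ β := by rw [h4]
  -- integrable majorant
  have hrint : IntervalIntegrable (fun t : ℝ => (M * ‖z‖ / α) * t ^ β) volume 0 1 :=
    (intervalIntegral.intervalIntegrable_rpow (Or.inl (by linarith))).const_mul _
  have hmono : (∫ t in (0:ℝ)..1, (‖FD t‖ + ‖FE t‖))
      ≤ ∫ t in (0:ℝ)..1, (M * ‖z‖ / α) * t ^ β :=
    integral_mono_on zero_le_one (hDint.norm.add hEint.norm) hrint hpt
  have hval : (∫ t in (0:ℝ)..1, (M * ‖z‖ / α) * t ^ β) = M * ‖z‖ := by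
    rw [intervalIntegral.integral_const_mul, integral_rpow (Or.inl (by linarith))]
    rw [Real.one_rpow, Real.zero_rpow (by linarith : β + 1 ≠ 0)]
    have hβα : α * (β + 1) = 1 := by
      have hαβ' : α * β = 1 - α := by rw [hβ]; field_simp
      linear_combination hαβ'
    field_simp
    first
      | linear_combination M * ‖z‖ * hβα
      | linear_combination (-(M * ‖z‖)) * hβα
      | linear_combination (M * ‖z‖ / α) * hβα
      | nlinarith [hβα]
  linarith [h1, h2, hadd, hmono.trans_eq hval]

private lemma ftcVal {u u' : ℂ → ℂ}
    (hu : ∀ w ∈ ball (0:ℂ) 1, HasDerivAt u (u' w) w)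
    (hu'c : ContinuousOn u' (ball (0:ℂ) 1)) (hu0 : u 0 = 0)
    {z : ℂ} (hz : z ∈ ball (0:ℂ) 1) :
    u z = ∫ t in (0:ℝ)..1, u' ((t:ℂ)*z) * z := by
  have hmapsIcc : ∀ t ∈ Icc (0:ℝ) 1, ((t:ℂ)*z) ∈ ball (0:ℂ) 1 :=
    fun t ht => memball_aux hz ht.1 ht.2
  have hlin : Continuous (fun t : ℝ => (t:ℂ)*z) :=
    Complex.continuous_ofReal.mul continuous_const
  have huIcc : uIcc (0:ℝ) 1 = Icc 0 1 := uIcc_of_le zero_le_one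
  have hderiv : ∀ t ∈ uIcc (0:ℝ) 1,
      HasDerivAt (fun s : ℝ => u ((s:ℂ)*z)) (u' ((t:ℂ)*z) * z) t := by
    intro t ht
    rw [huIcc] at ht
    exact ((hu _ (hmapsIcc t ht)).comp (t:ℂ) (hasDerivAt_mul_const z)).comp_ofReal
  have hint : IntervalIntegrable (fun t : ℝ => u' ((t:ℂ)*z) * z) volume 0 1 := by
    apply ContinuousOn.intervalIntegrable
    rw [huIcc]
    exact (hu'c.comp hlin.continuousOn hmapsIcc).mul continuousOn_const
  have := integral_eq_sub_of_hasDerivAt hderiv hint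
  rw [this]
  push_cast
  rw [one_mul, zero_mul, hu0, sub_zero]

theorem stmt_2 (M α : ℝ) (hM : 0 < M) (hα0 : 0 < α) (hα1 : α ≤ 1)
    (h g : ℂ → ℂ)
    (hhd : AnalyticOn ℂ h (ball (0:ℂ) 1))
    (hgd : AnalyticOn ℂ g (ball (0:ℂ) 1))
    (hh0 : h 0 = 0) (hh1 : deriv h 0 = 1) (hg0 : g 0 = 0) (hg1 : deriv g 0 = 0)
    (hcl : ∀ z ∈ ball (0:ℂ) 1,
      ‖(1 - (α:ℂ)) * deriv h z + (α:ℂ) * z * deriv (deriv h) z - (1 - (α:ℂ))‖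
        ≤ M - ‖(1 - (α:ℂ)) * deriv g z + (α:ℂ) * z * deriv (deriv g) z‖) :
    ∀ z ∈ ball (0:ℂ) 1,
      ‖z‖ - M * ‖z‖^2 / 2 ≤ ‖h z + (starRingEnd ℂ) (g z)‖ ∧
      ‖h z + (starRingEnd ℂ) (g z)‖ ≤ ‖z‖ + M * ‖z‖^2 / 2 := by
  have hop : IsOpen (ball (0:ℂ) 1) := isOpen_ball
  have hh : AnalyticOnNhd ℂ h (ball (0:ℂ) 1) := hop.analyticOn_iff_analyticOnNhd.1 hhd
  have hgn : AnalyticOnNhd ℂ g (ball (0:ℂ) 1) := hop.analyticOn_iff_analyticOnNhd.1 hgd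
  set Dh : ℂ → ℂ := fun w => deriv h w - 1 with hDhdef
  set Dg : ℂ → ℂ := deriv g with hDgdef
  have hDh : AnalyticOnNhd ℂ Dh (ball (0:ℂ) 1) := hh.deriv.sub analyticOnNhd_const
  have hDg : AnalyticOnNhd ℂ Dg (ball (0:ℂ) 1) := hgn.deriv
  have hDh0 : Dh 0 = 0 := by simp [hDhdef, hh1]
  have hDg0 : Dg 0 = 0 := hg1
  have hderivDh : ∀ w, deriv Dh w = deriv (deriv h) w := fun w => by
    simp only [hDhdef]
    exact deriv_sub_const 1
  -- the pair bound
  have key0 : ∀ w ∈ ball (0:ℂ) 1,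
      ‖(1-(α:ℂ)) * Dh w + (α:ℂ) * w * deriv Dh w‖ +
      ‖(1-(α:ℂ)) * Dg w + (α:ℂ) * w * deriv Dg w‖ ≤ M := by
    intro w hw
    have hb := hcl w hw
    have e1 : (1-(α:ℂ)) * Dh w + (α:ℂ) * w * deriv Dh w
        = (1 - (α:ℂ)) * deriv h w + (α:ℂ) * w * deriv (deriv h) w - (1 - (α:ℂ)) := by
      rw [hderivDh w]; simp only [hDhdef]; ring
    rw [e1]
    linarith
  have hPh : AnalyticOnNhd ℂ (fun w => (1-(α:ℂ)) * Dh w + (α:ℂ) * w * deriv Dh w)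
      (ball (0:ℂ) 1) :=
    (analyticOnNhd_const.mul hDh).add
      ((analyticOnNhd_const.mul analyticOnNhd_id).mul hDh.deriv)
  have hPg : AnalyticOnNhd ℂ (fun w => (1-(α:ℂ)) * Dg w + (α:ℂ) * w * deriv Dg w)
      (ball (0:ℂ) 1) :=
    (analyticOnNhd_const.mul hDg).add
      ((analyticOnNhd_const.mul analyticOnNhd_id).mul hDg.deriv)
  have hPh0 : (1-(α:ℂ)) * Dh 0 + (α:ℂ) * 0 * deriv Dh 0 = 0 := by
    rw [hDh0]; ring
  have hPg0 : (1-(α:ℂ)) * Dg 0 + (α:ℂ) * 0 * deriv Dg 0 = 0 := by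
    rw [hDg0]; ring
  have key1 := pairSchwarz hPh.differentiableOn hPg.differentiableOn hPh0 hPg0 key0
  have key2 : ∀ w ∈ ball (0:ℂ) 1, ‖Dh w‖ + ‖Dg w‖ ≤ M * ‖w‖ :=
    fun w hw => derivBound hDh hDg hDh0 hDg0 hα0 hα1 hM.le hw key1
  -- main estimate
  intro z hz
  have hz1 : ‖z‖ < 1 := mem_ball_zero_iff.1 hz
  have e_h : h z - z = ∫ t in (0:ℝ)..1, Dh ((t:ℂ)*z) * z := by
    apply ftcVal (u := fun w => h w - w) (u' := Dh) ?_ hDh.continuousOn (by simp [hh0]) hz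
    intro w hw
    exact ((hh w hw).differentiableAt.hasDerivAt).sub (hasDerivAt_id w)
  have e_g : g z = ∫ t in (0:ℝ)..1, Dg ((t:ℂ)*z) * z := by
    apply ftcVal (u := g) (u' := Dg) ?_ hDg.continuousOn hg0 hz
    intro w hw
    exact (hgn w hw).differentiableAt.hasDerivAt
  have hmapsIcc : ∀ t ∈ Icc (0:ℝ) 1, ((t:ℂ)*z) ∈ ball (0:ℂ) 1 :=
    fun t ht => memball_aux hz ht.1 ht.2
  have hlin : Continuous (fun t : ℝ => (t:ℂ)*z) :=
    Complex.continuous_ofReal.mul continuous_const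
  have huIcc : uIcc (0:ℝ) 1 = Icc 0 1 := uIcc_of_le zero_le_one
  have hint_h : IntervalIntegrable (fun t : ℝ => Dh ((t:ℂ)*z) * z) volume 0 1 := by
    apply ContinuousOn.intervalIntegrable
    rw [huIcc]
    exact (hDh.continuousOn.comp hlin.continuousOn hmapsIcc).mul continuousOn_const
  have hint_g : IntervalIntegrable (fun t : ℝ => Dg ((t:ℂ)*z) * z) volume 0 1 := by
    apply ContinuousOn.intervalIntegrable
    rw [huIcc]
    exact (hDg.continuousOn.comp hlin.continuousOn hmapsIcc).mul continuousOn_const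
  have h1 : ‖h z - z‖ ≤ ∫ t in (0:ℝ)..1, ‖Dh ((t:ℂ)*z) * z‖ := by
    rw [e_h]; exact norm_integral_le_integral_norm zero_le_one
  have h2 : ‖g z‖ ≤ ∫ t in (0:ℝ)..1, ‖Dg ((t:ℂ)*z) * z‖ := by
    rw [e_g]; exact norm_integral_le_integral_norm zero_le_one
  have hadd : (∫ t in (0:ℝ)..1, ‖Dh ((t:ℂ)*z) * z‖) + (∫ t in (0:ℝ)..1, ‖Dg ((t:ℂ)*z) * z‖)
      = ∫ t in (0:ℝ)..1, (‖Dh ((t:ℂ)*z) * z‖ + ‖Dg ((t:ℂ)*z) * z‖) :=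
    (integral_add hint_h.norm hint_g.norm).symm
  have hpt : ∀ t ∈ Icc (0:ℝ) 1,
      ‖Dh ((t:ℂ)*z) * z‖ + ‖Dg ((t:ℂ)*z) * z‖ ≤ (M * ‖z‖^2) * t := by
    intro t ht
    have htz := hmapsIcc t ht
    have hnz : ‖(t:ℂ)*z‖ = t * ‖z‖ := by
      rw [norm_mul, Complex.norm_real, Real.norm_eq_abs, _root_.abs_of_nonneg ht.1]
    have := key2 _ htz
    rw [hnz] at this
    rw [norm_mul, norm_mul]
    nlinarith [norm_nonneg z, norm_nonneg (Dh ((t:ℂ)*z)), norm_nonneg (Dg ((t:ℂ)*z))]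
  have hrint : IntervalIntegrable (fun t : ℝ => (M * ‖z‖^2) * t) volume 0 1 :=
    (intervalIntegrable_id).const_mul _
  have hmono : (∫ t in (0:ℝ)..1, (‖Dh ((t:ℂ)*z) * z‖ + ‖Dg ((t:ℂ)*z) * z‖))
      ≤ ∫ t in (0:ℝ)..1, (M * ‖z‖^2) * t :=
    integral_mono_on zero_le_one (hint_h.norm.add hint_g.norm) hrint hpt
  have hval : (∫ t in (0:ℝ)..1, (M * ‖z‖^2) * t) = M * ‖z‖^2 / 2 := by
    rw [intervalIntegral.integral_const_mul, integral_id]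
    ring
  have hfinal : ‖h z - z‖ + ‖g z‖ ≤ M * ‖z‖^2 / 2 := by
    linarith [h1, h2, hadd, hmono.trans_eq hval]
  have hconj : ‖(starRingEnd ℂ) (g z)‖ = ‖g z‖ := RCLike.norm_conj _
  have hdecomp : h z + (starRingEnd ℂ) (g z) = z + ((h z - z) + (starRingEnd ℂ) (g z)) := by
    ring
  have hup : ‖h z + (starRingEnd ℂ) (g z)‖ ≤ ‖z‖ + M * ‖z‖^2 / 2 := by
    rw [hdecomp]
    calc ‖z + ((h z - z) + (starRingEnd ℂ) (g z))‖
        ≤ ‖z‖ + ‖(h z - z) + (starRingEnd ℂ) (g z)‖ := norm_add_le _ _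
      _ ≤ ‖z‖ + (‖h z - z‖ + ‖(starRingEnd ℂ) (g z)‖) := by
          linarith [norm_add_le (h z - z) ((starRingEnd ℂ) (g z))]
      _ ≤ ‖z‖ + M * ‖z‖^2 / 2 := by rw [hconj]; linarith
  have hlow : ‖z‖ - M * ‖z‖^2 / 2 ≤ ‖h z + (starRingEnd ℂ) (g z)‖ := by
    have htri : ‖z‖ ≤ ‖h z + (starRingEnd ℂ) (g z)‖ + ‖(h z - z) + (starRingEnd ℂ) (g z)‖ := by
      have h6 := norm_sub_le (h z + (starRingEnd ℂ) (g z)) ((h z - z) + (starRingEnd ℂ) (g z))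
      have e : (h z + (starRingEnd ℂ) (g z)) - ((h z - z) + (starRingEnd ℂ) (g z)) = z := by ring
      rw [e] at h6; exact h6
    have h5 : ‖(h z - z) + (starRingEnd ℂ) (g z)‖ ≤ M * ‖z‖^2 / 2 := by
      calc ‖(h z - z) + (starRingEnd ℂ) (g z)‖
          ≤ ‖h z - z‖ + ‖(starRingEnd ℂ) (g z)‖ := norm_add_le _ _
        _ ≤ M * ‖z‖^2 / 2 := by rw [hconj]; linarith
    linarith
  exact ⟨hlow, hup⟩
end

section
/- Let M > 0, α ∈ (0,1], and f = h + conj(g) ∈ D⁰_H(α,M). Then the Jacobian J_f(z) = |h'(z)|² - |g'(z)|² satisfies J_f(z) ≤ (1 + M|z|)² for all z in the unit disk. -/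
open Metric Complex MeasureTheory Set

/-- Schwarz-type lemma: analytic on unit ball, vanishing at 0, bounded by M, then `‖w ζ‖ ≤ M‖ζ‖`. -/
lemma schwarz_M_aux {w : ℂ → ℂ} {M : ℝ} (hM : 0 < M) (hd : DifferentiableOn ℂ w (ball 0 1))
    (h0 : w 0 = 0) (hb : ∀ ζ ∈ ball (0:ℂ) 1, ‖w ζ‖ ≤ M) :
    ∀ ζ ∈ ball (0:ℂ) 1, ‖w ζ‖ ≤ M * ‖ζ‖ := by
  intro ζ hζ
  rcases eq_or_ne ζ 0 with rfl | hne
  · simp [h0]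
  have hζpos : 0 < ‖ζ‖ := norm_pos_iff.mpr hne
  refine le_of_forall_pos_le_add fun ε hε => ?_
  have hmaps : Set.MapsTo w (ball 0 1) (ball (w 0) (M + ε / ‖ζ‖)) := by
    intro x hx
    rw [h0, mem_ball, dist_zero_right]
    exact lt_of_le_of_lt (hb x hx) (lt_add_of_pos_right _ (div_pos hε hζpos))
  have hkey := Complex.dist_le_div_mul_dist_of_mapsTo_ball hd (hmaps.mono_right ball_subset_closedBall) hζ
  rw [h0, dist_zero_right, dist_zero_right, div_one] at hkey
  calc ‖w ζ‖ ≤ (M + ε / ‖ζ‖) * ‖ζ‖ := hkey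
    _ = M * ‖ζ‖ + ε := by rw [add_mul, div_mul_cancel₀ _ hζpos.ne']

lemma core_aux (M α : ℝ) (hM : 0 < M) (hα0 : 0 < α) (hα1 : α ≤ 1)
    (h : ℂ → ℂ) (hh : AnalyticOnNhd ℂ h (ball 0 1)) (hh1 : deriv h 0 = 1)
    (hb : ∀ ζ ∈ ball (0:ℂ) 1,
      ‖(1 - (α:ℂ)) * deriv h ζ + (α:ℂ) * ζ * deriv (deriv h) ζ - (1 - (α:ℂ))‖ ≤ M) :
    ∀ z ∈ ball (0:ℂ) 1, ‖deriv h z - 1‖ ≤ M * ‖z‖ := by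
  set w : ℂ → ℂ :=
    fun ζ => (1 - (α:ℂ)) * deriv h ζ + (α:ℂ) * ζ * deriv (deriv h) ζ - (1 - (α:ℂ)) with hwdef
  have hh' : AnalyticOnNhd ℂ (deriv h) (ball 0 1) := hh.deriv
  have hh'' : AnalyticOnNhd ℂ (deriv (deriv h)) (ball 0 1) := hh'.deriv
  have hwd : DifferentiableOn ℂ w (ball 0 1) := by
    apply DifferentiableOn.sub _ (differentiableOn_const _)
    exact ((differentiableOn_const _).mul hh'.differentiableOn).add
      (((differentiableOn_const _).mul differentiableOn_id).mul hh''.differentiableOn)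
  have hw0 : w 0 = 0 := by simp [hwdef, hh1]
  have hwb : ∀ ζ ∈ ball (0:ℂ) 1, ‖w ζ‖ ≤ M * ‖ζ‖ := schwarz_M_aux hM hwd hw0 hb
  intro z hz
  rcases eq_or_ne z 0 with rfl | hzne
  · simp [hh1]
  have hznorm : ‖z‖ < 1 := mem_ball_zero_iff.mp hz
  set β : ℝ := 1 / α with hβdef
  have hβ1 : 1 ≤ β := one_le_one_div hα0 hα1
  have hβ0 : 0 < β := by positivity
  set ψ : ℂ → ℂ := fun ζ => deriv h ζ - 1 with hψdef
  set u : ℝ → ℂ := fun t => (t ^ (β - 1) : ℝ) • ψ ((t:ℂ) * z) with hudef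
  set u' : ℝ → ℂ := fun t => ((β * t ^ (β - 2)) : ℝ) • w ((t:ℂ) * z) with hu'def
  have hmem : ∀ t : ℝ, t ∈ Icc (0:ℝ) 1 → (t:ℂ) * z ∈ ball (0:ℂ) 1 := by
    intro t ht
    rw [mem_ball_zero_iff, norm_mul, Complex.norm_real, Real.norm_of_nonneg ht.1]
    nlinarith [norm_nonneg z, ht.2]
  -- derivative of u
  have hderiv : ∀ t ∈ Ioo (0:ℝ) 1, HasDerivAt u (u' t) t := by
    intro t ht
    have htm : (t:ℂ) * z ∈ ball (0:ℂ) 1 := hmem t ⟨ht.1.le, ht.2.le⟩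
    have h1 : HasDerivAt (fun s : ℝ => s ^ (β - 1)) ((β - 1) * t ^ (β - 1 - 1)) t :=
      Real.hasDerivAt_rpow_const (Or.inl ht.1.ne')
    have hψd : HasDerivAt ψ (deriv (deriv h) ((t:ℂ) * z)) ((t:ℂ) * z) := by
      have := ((hh' _ htm).differentiableAt).hasDerivAt
      exact this.sub_const 1
    have h2c : HasDerivAt (fun ζ : ℂ => ψ (ζ * z)) (deriv (deriv h) ((t:ℂ) * z) * z) ((t:ℂ)) :=
      HasDerivAt.comp (x := (t:ℂ)) (h₂ := ψ) hψd (hasDerivAt_mul_const z)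
    have h2 : HasDerivAt (fun s : ℝ => ψ ((s:ℂ) * z)) (deriv (deriv h) ((t:ℂ) * z) * z) t :=
      h2c.comp_ofReal
    have hsm := h1.smul h2
    refine hsm.congr_deriv ?_
    symm
    rw [hu'def]
    simp only [Complex.real_smul, hwdef, hψdef]
    push_cast
    have hαc : (α : ℂ) ≠ 0 := by exact_mod_cast hα0.ne'
    have hβc : (β : ℂ) = 1 / (α : ℂ) := by rw [hβdef]; push_cast; ring
    have hpow : ((t : ℝ) ^ (β - 1) : ℝ) = (t ^ (β - 2)) * t := by
      rw [show β - 1 = (β - 2) + 1 by ring, Real.rpow_add_one ht.1.ne']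
    have hpow2 : β - 1 - 1 = β - 2 := by ring
    rw [hpow2, hpow, hβc]
    push_cast
    field_simp
    ring
  -- continuity of u on Icc
  have hucont : ContinuousOn u (Icc 0 1) := by
    apply ContinuousOn.fun_smul
    · intro x _
      exact (Real.continuousAt_rpow_const x _ (Or.inr (by linarith))).continuousWithinAt
    · have hc : ContinuousOn ψ (ball 0 1) := hh'.continuousOn.sub continuousOn_const
      exact hc.comp ((Complex.continuous_ofReal.continuousOn).mul continuousOn_const) hmem
  -- norm bound for u'
  have hu'bound : ∀ t ∈ Ioc (0:ℝ) 1, ‖u' t‖ ≤ (M * ‖z‖ * β) * t ^ (β - 1) := by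
    intro t ht
    have htm : (t:ℂ) * z ∈ ball (0:ℂ) 1 := hmem t ⟨ht.1.le, ht.2⟩
    have hW : ‖w ((t:ℂ) * z)‖ ≤ M * (t * ‖z‖) := by
      have := hwb _ htm
      rwa [norm_mul, Complex.norm_real, Real.norm_of_nonneg ht.1.le] at this
    have hT : (0:ℝ) ≤ t ^ (β - 2) := Real.rpow_nonneg ht.1.le _
    rw [hu'def]
    simp only [norm_smul, Real.norm_eq_abs]
    rw [_root_.abs_of_nonneg (by positivity : (0:ℝ) ≤ β * t ^ (β - 2))]
    have hpow : t ^ (β - 1) = (t ^ (β - 2)) * t := by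
      rw [show β - 1 = (β - 2) + 1 by ring, Real.rpow_add_one ht.1.ne']
    rw [hpow]
    calc β * t ^ (β - 2) * ‖w ((t:ℂ) * z)‖ ≤ β * t ^ (β - 2) * (M * (t * ‖z‖)) := by
          apply mul_le_mul_of_nonneg_left hW (by positivity)
      _ = M * ‖z‖ * β * (t ^ (β - 2) * t) := by ring
  -- interval integrability of u'
  have hu'cont : ContinuousOn u' (Ioo 0 1) := by
    apply ContinuousOn.fun_smul
    · apply ContinuousOn.mul continuousOn_const
      intro x hx
      exact (Real.continuousAt_rpow_const x _ (Or.inl hx.1.ne')).continuousWithinAt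
    · exact hwd.continuousOn.comp
        ((Complex.continuous_ofReal.continuousOn).mul continuousOn_const)
        (fun t ht => hmem t (Ioo_subset_Icc_self ht))
  have hu'int : IntervalIntegrable u' volume 0 1 := by
    rw [intervalIntegrable_iff_integrableOn_Ioo_of_le zero_le_one]
    apply MeasureTheory.Integrable.mono'
      (g := fun _ : ℝ => M * ‖z‖ * β)
      (integrableOn_const measure_Ioo_lt_top.ne)
      (hu'cont.aestronglyMeasurable measurableSet_Ioo)
    filter_upwards [ae_restrict_mem measurableSet_Ioo] with t ht
    calc ‖u' t‖ ≤ (M * ‖z‖ * β) * t ^ (β - 1) := hu'bound t ⟨ht.1, ht.2.le⟩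
      _ ≤ (M * ‖z‖ * β) * 1 := by
          apply mul_le_mul_of_nonneg_left
            (Real.rpow_le_one ht.1.le ht.2.le (by linarith)) (by positivity)
      _ = M * ‖z‖ * β := mul_one _
  -- FTC
  have hftc : ∫ t in (0:ℝ)..1, u' t = u 1 - u 0 :=
    intervalIntegral.integral_eq_sub_of_hasDeriv_right_of_le zero_le_one hucont
      (fun t ht => (hderiv t ht).hasDerivWithinAt) hu'int
  have hu1 : u 1 = deriv h z - 1 := by
    simp [hudef, hψdef, Real.one_rpow]
  have hu0 : u 0 = 0 := by
    simp [hudef, hψdef, hh1]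
  have hnorm : ‖deriv h z - 1‖ = ‖∫ t in (0:ℝ)..1, u' t‖ := by
    rw [hftc, hu1, hu0, sub_zero]
  rw [hnorm]
  have hgint : IntervalIntegrable (fun t : ℝ => (M * ‖z‖ * β) * t ^ (β - 1)) volume 0 1 :=
    (intervalIntegral.intervalIntegrable_rpow' (by linarith)).const_mul _
  have hIg : ∫ t in (0:ℝ)..1, (M * ‖z‖ * β) * t ^ (β - 1) = M * ‖z‖ := by
    rw [intervalIntegral.integral_const_mul, integral_rpow (Or.inl (by linarith))]
    rw [show β - 1 + 1 = β by ring, Real.one_rpow, Real.zero_rpow hβ0.ne']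
    field_simp
    norm_num
  calc ‖∫ t in (0:ℝ)..1, u' t‖ ≤ |∫ t in (0:ℝ)..1, (M * ‖z‖ * β) * t ^ (β - 1)| := by
        apply intervalIntegral.norm_integral_le_abs_of_norm_le _ hgint
        filter_upwards [ae_restrict_mem measurableSet_uIoc] with t ht
        rw [uIoc_of_le zero_le_one] at ht
        exact hu'bound t ht
    _ = M * ‖z‖ := by
        rw [hIg, _root_.abs_of_nonneg (by positivity)]

theorem stmt_3 (M α : ℝ) (hM : 0 < M) (hα0 : 0 < α) (hα1 : α ≤ 1)
    (h g : ℂ → ℂ)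
    (hhd : AnalyticOn ℂ h (ball (0:ℂ) 1))
    (hgd : AnalyticOn ℂ g (ball (0:ℂ) 1))
    (hh0 : h 0 = 0) (hh1 : deriv h 0 = 1) (hg0 : g 0 = 0) (hg1 : deriv g 0 = 0)
    (hcl : ∀ z ∈ ball (0:ℂ) 1,
      ‖(1 - (α:ℂ)) * deriv h z + (α:ℂ) * z * deriv (deriv h) z - (1 - (α:ℂ))‖
        ≤ M - ‖(1 - (α:ℂ)) * deriv g z + (α:ℂ) * z * deriv (deriv g) z‖) :
    ∀ z ∈ ball (0:ℂ) 1,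
      ‖deriv h z‖^2 - ‖deriv g z‖^2 ≤ (1 + M * ‖z‖)^2 := by
  intro z hz
  have hhN : AnalyticOnNhd ℂ h (ball 0 1) :=
    (isOpen_ball.analyticOn_iff_analyticOnNhd).mp hhd
  have hb : ∀ ζ ∈ ball (0:ℂ) 1,
      ‖(1 - (α:ℂ)) * deriv h ζ + (α:ℂ) * ζ * deriv (deriv h) ζ - (1 - (α:ℂ))‖ ≤ M :=
    fun ζ hζ => (hcl ζ hζ).trans (by
      linarith [norm_nonneg ((1 - (α:ℂ)) * deriv g ζ + (α:ℂ) * ζ * deriv (deriv g) ζ)])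
  have key := core_aux M α hM hα0 hα1 h hhN hh1 hb z hz
  have h1 : ‖deriv h z‖ ≤ 1 + M * ‖z‖ := by
    calc ‖deriv h z‖ = ‖(deriv h z - 1) + 1‖ := by ring_nf
      _ ≤ ‖deriv h z - 1‖ + ‖(1:ℂ)‖ := norm_add_le _ _
      _ ≤ 1 + M * ‖z‖ := by rw [norm_one]; linarith
  nlinarith [norm_nonneg (deriv g z), norm_nonneg (deriv h z), norm_nonneg z,
    sq_nonneg (‖deriv g z‖)]
end

section
/- Let M > 0 and α ∈ (0,1]. Let f = h + conj(g) with h(z) = z + Σ_{n≥2} a_n z^n and g(z) = Σ_{n≥2} b_n z^n analytic on the unit disk. If Σ_{n≥2} (n + (n²-2n)α)(|a_n| + |b_n|) ≤ M, then |(1-α)h'(z) + αz h''(z) - (1-α)| ≤ M - |(1-α)g'(z) + αz g''(z)| for all z in the unit disk. -/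
open Metric Complex


lemma key_deriv (c : ℕ → ℂ) (f : ℂ → ℂ)
    (hc : Summable fun n : ℕ => (n : ℝ) * ‖c n‖)
    (hf : ∀ z ∈ ball (0:ℂ) 1, HasSum (fun n : ℕ => c n * z ^ n) (f z))
    {z : ℂ} (hz : z ∈ ball (0:ℂ) 1) :
    HasSum (fun n : ℕ => ((n:ℂ) + 1) * c (n + 1) * z ^ n) (deriv f z) := by
  have hz1 : ‖z‖ < 1 := by simpa [mem_ball, dist_eq_norm] using hz
  set r : ℝ := (‖z‖ + 1) / 2 with hr
  have hr1 : r < 1 := by simp only [hr]; linarith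
  have hzr : ‖z‖ < r := by simp only [hr]; linarith
  have hzt : z ∈ ball (0:ℂ) r := by simpa [mem_ball, dist_eq_norm] using hzr
  have hD : HasDerivAt (fun w => ∑' n : ℕ, c n * w ^ n)
      (∑' n : ℕ, c n * ((n : ℂ) * z ^ (n - 1))) z := by
    apply hasDerivAt_tsum_of_isPreconnected hc isOpen_ball
      ((convex_ball (0:ℂ) r).isPreconnected)
      (fun n y _ => (hasDerivAt_pow n y).const_mul (c n)) _ (mem_ball_self (by positivity)) _ hzt
    · intro n y hy
      have hy1 : ‖y‖ ≤ 1 := by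
        have : ‖y‖ < r := by simpa [mem_ball, dist_eq_norm] using hy
        linarith
      calc ‖c n * ((n:ℂ) * y ^ (n-1))‖ = ‖c n‖ * ((n:ℝ) * ‖y‖ ^ (n-1)) := by
            simp [norm_mul, norm_pow]
        _ ≤ ‖c n‖ * ((n:ℝ) * 1) := by
            gcongr
            exact pow_le_one₀ (norm_nonneg y) hy1
        _ = (n:ℝ) * ‖c n‖ := by ring
    · apply summable_of_ne_finset_zero (s := {0})
      intro n hn
      simp at hn
      simp [zero_pow hn]
  have heq : f =ᶠ[nhds z] fun w => ∑' n : ℕ, c n * w ^ n := by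
    filter_upwards [isOpen_ball.mem_nhds hz] with w hw
    exact ((hf w hw).tsum_eq).symm
  have hD' : HasDerivAt f (∑' n : ℕ, c n * ((n : ℂ) * z ^ (n - 1))) z :=
    hD.congr_of_eventuallyEq heq
  have hsum' : Summable fun n : ℕ => c n * ((n : ℂ) * z ^ (n - 1)) := by
    apply Summable.of_norm_bounded hc
    intro n
    calc ‖c n * ((n:ℂ) * z ^ (n-1))‖ = ‖c n‖ * ((n:ℝ) * ‖z‖ ^ (n-1)) := by
          simp [norm_mul, norm_pow]
      _ ≤ ‖c n‖ * ((n:ℝ) * 1) := by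
          gcongr
          exact pow_le_one₀ (norm_nonneg z) hz1.le
      _ = (n:ℝ) * ‖c n‖ := by ring
  have hS : HasSum (fun n : ℕ => c n * ((n : ℂ) * z ^ (n - 1))) (deriv f z) := by
    rw [hD'.deriv]; exact hsum'.hasSum
  have h0 : c 0 * ((0:ℂ) * z ^ (0 - 1)) = 0 := by simp
  have hshift : HasSum (fun n : ℕ => c (n+1) * ((((n+1):ℕ) : ℂ) * z ^ ((n+1) - 1))) (deriv f z) := by
    refine (hasSum_nat_add_iff (f := fun n : ℕ => c n * ((n:ℂ) * z ^ (n-1))) 1).mpr ?_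
    simpa [h0] using hS
  convert hshift using 2 with n
  push_cast
  ring

lemma key2 (αC : ℂ) (c : ℕ → ℂ) (f : ℂ → ℂ)
    (hc : Summable fun n : ℕ => (n:ℝ)^2 * ‖c n‖)
    (hf : ∀ z ∈ ball (0:ℂ) 1, HasSum (fun n : ℕ => c n * z ^ n) (f z))
    {z : ℂ} (hz : z ∈ ball (0:ℂ) 1) :
    HasSum (fun n : ℕ => (1 + (n:ℂ) * αC) * (((n:ℂ) + 2) * c (n + 2)) * z ^ (n + 1))
      ((1 - αC) * deriv f z + αC * z * deriv (deriv f) z - (1 - αC) * c 1) := by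
  have S1 : Summable fun n : ℕ => (n:ℝ) * ‖c n‖ := by
    apply Summable.of_nonneg_of_le (fun n => by positivity) _ hc
    intro n
    have : (n:ℝ) ≤ (n:ℝ)^2 := by exact_mod_cast Nat.le_self_pow two_ne_zero n
    exact mul_le_mul_of_nonneg_right this (norm_nonneg _)
  have hf1 : ∀ w ∈ ball (0:ℂ) 1,
      HasSum (fun n : ℕ => ((n:ℂ) + 1) * c (n + 1) * w ^ n) (deriv f w) :=
    fun w hw => key_deriv c f S1 hf hw
  have Sd : Summable fun n : ℕ => (n:ℝ) * ‖((n:ℂ) + 1) * c (n + 1)‖ := by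
    have h2 : Summable fun n : ℕ => (((n+1:ℕ)):ℝ)^2 * ‖c (n+1)‖ :=
      (summable_nat_add_iff (f := fun n : ℕ => (n:ℝ)^2 * ‖c n‖) 1).mpr hc
    apply Summable.of_nonneg_of_le (fun n => by positivity) _ h2
    intro n
    have hnorm : ‖((n:ℂ) + 1) * c (n + 1)‖ = ((n:ℝ) + 1) * ‖c (n+1)‖ := by
      rw [norm_mul]
      congr 1
      have : ((n:ℂ) + 1) = (((n+1:ℕ)):ℂ) := by push_cast; ring
      rw [this, Complex.norm_natCast]
      push_cast; ring
    rw [hnorm]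
    push_cast
    nlinarith [norm_nonneg (c (n+1)), Nat.cast_nonneg (α := ℝ) n]
  have hA1 := hf1 z hz
  have hA2 : HasSum (fun n : ℕ =>
      ((n:ℂ) + 1) * ((((n+1:ℕ):ℂ) + 1) * c (n + 2)) * z ^ n) (deriv (deriv f) z) :=
    key_deriv (fun n => ((n:ℂ) + 1) * c (n + 1)) (deriv f) Sd hf1 hz
  have h2' := hA2.mul_left (αC * z)
  have heqfun : (fun n : ℕ =>
      αC * ((n+1:ℕ):ℂ) * ((((n+1:ℕ):ℂ) + 1) * c ((n+1) + 1)) * z ^ (n+1))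
      = fun n : ℕ => (αC * z) * (((n:ℂ) + 1) * ((((n+1:ℕ):ℂ) + 1) * c (n + 2)) * z ^ n) := by
    funext n
    push_cast
    ring
  have hv : HasSum (fun n : ℕ =>
      αC * ((n+1:ℕ):ℂ) * ((((n+1:ℕ):ℂ) + 1) * c ((n+1) + 1)) * z ^ (n+1))
      (αC * z * deriv (deriv f) z) := by
    rw [heqfun]
    exact h2'
  have hv2 : HasSum (fun m : ℕ => αC * (m:ℂ) * (((m:ℂ) + 1) * c (m + 1)) * z ^ m)
      (αC * z * deriv (deriv f) z) := by
    have := (hasSum_nat_add_iff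
      (f := fun m : ℕ => αC * (m:ℂ) * (((m:ℂ) + 1) * c (m + 1)) * z ^ m) 1).mp
      hv
    simpa using this
  have h1' := hA1.mul_left (1 - αC)
  have hW : HasSum (fun n : ℕ => ((1 - αC) + (n:ℂ) * αC) * (((n:ℂ) + 1) * c (n + 1)) * z ^ n)
      ((1 - αC) * deriv f z + αC * z * deriv (deriv f) z) := by
    have := h1'.add hv2
    convert this using 2 with n
    · rfl
    push_cast
    ring
  have hfinal : HasSum (fun n : ℕ =>
      ((1 - αC) + ((n+1:ℕ):ℂ) * αC) * ((((n+1:ℕ):ℂ) + 1) * c ((n+1) + 1)) * z ^ (n+1))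
      ((1 - αC) * deriv f z + αC * z * deriv (deriv f) z - (1 - αC) * c 1) := by
    refine (hasSum_nat_add_iff
      (f := fun n : ℕ => ((1 - αC) + (n:ℂ) * αC) * (((n:ℂ) + 1) * c (n + 1)) * z ^ n) 1).mpr ?_
    convert hW using 1
    · rfl
    simp
  convert hfinal using 2 with n
  push_cast
  ring

theorem stmt_4 (M α : ℝ) (hM : 0 < M) (hα0 : 0 < α) (hα1 : α ≤ 1)
    (a b : ℕ → ℂ) (h g : ℂ → ℂ)
    (ha0 : a 0 = 0) (ha1 : a 1 = 1) (hb0 : b 0 = 0) (hb1 : b 1 = 0)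
    (hh : ∀ z ∈ ball (0:ℂ) 1, HasSum (fun n => a n * z ^ n) (h z))
    (hg : ∀ z ∈ ball (0:ℂ) 1, HasSum (fun n => b n * z ^ n) (g z))
    (hsum : Summable (fun n : ℕ =>
      (((n+2 : ℕ) : ℝ) + (((n+2:ℕ):ℝ)^2 - 2*((n+2:ℕ):ℝ)) * α) * (‖a (n+2)‖ + ‖b (n+2)‖)))
    (hbound : (∑' n : ℕ,
      (((n+2 : ℕ) : ℝ) + (((n+2:ℕ):ℝ)^2 - 2*((n+2:ℕ):ℝ)) * α) * (‖a (n+2)‖ + ‖b (n+2)‖)) ≤ M) :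
    ∀ z ∈ ball (0:ℂ) 1,
      ‖(1 - (α:ℂ)) * deriv h z + (α:ℂ) * z * deriv (deriv h) z - (1 - (α:ℂ))‖
        ≤ M - ‖(1 - (α:ℂ)) * deriv g z + (α:ℂ) * z * deriv (deriv g) z‖ := by
  push_cast at hsum hbound
  have hCpos : ∀ n : ℕ, 0 ≤ ((n:ℝ)+2) + (((n:ℝ)+2)^2 - 2*((n:ℝ)+2))*α := by
    intro n
    have hn : (0:ℝ) ≤ (n:ℝ) := Nat.cast_nonneg n
    nlinarith [mul_nonneg hα0.le hn, mul_nonneg (mul_nonneg hα0.le hn) hn]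
  -- summability of weighted coefficient norms
  have SA : Summable fun n : ℕ =>
      (((n:ℝ)+2) + (((n:ℝ)+2)^2 - 2*((n:ℝ)+2))*α) * ‖a (n+2)‖ := by
    apply Summable.of_nonneg_of_le (fun n => mul_nonneg (hCpos n) (norm_nonneg _)) _ hsum
    intro n
    apply mul_le_mul_of_nonneg_left _ (hCpos n)
    simp [norm_nonneg]
  have SB : Summable fun n : ℕ =>
      (((n:ℝ)+2) + (((n:ℝ)+2)^2 - 2*((n:ℝ)+2))*α) * ‖b (n+2)‖ := by
    apply Summable.of_nonneg_of_le (fun n => mul_nonneg (hCpos n) (norm_nonneg _)) _ hsum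
    intro n
    apply mul_le_mul_of_nonneg_left _ (hCpos n)
    simp [norm_nonneg]
  have hsq : ∀ (c : ℕ → ℂ), (Summable fun n : ℕ =>
      (((n:ℝ)+2) + (((n:ℝ)+2)^2 - 2*((n:ℝ)+2))*α) * ‖c (n+2)‖) →
      Summable fun n : ℕ => (n:ℝ)^2 * ‖c n‖ := by
    intro c SC
    apply (summable_nat_add_iff (f := fun n : ℕ => (n:ℝ)^2 * ‖c n‖) 2).mp
    have : Summable fun n : ℕ =>
        (3/α) * ((((n:ℝ)+2) + (((n:ℝ)+2)^2 - 2*((n:ℝ)+2))*α) * ‖c (n+2)‖) := SC.mul_left _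
    apply Summable.of_nonneg_of_le (fun n => by positivity) _ this
    intro n
    have hn : (0:ℝ) ≤ (n:ℝ) := Nat.cast_nonneg n
    have key : (((n:ℝ)+2))^2 ≤ (3/α) * (((n:ℝ)+2) + (((n:ℝ)+2)^2 - 2*((n:ℝ)+2))*α) := by
      rw [div_mul_eq_mul_div, le_div_iff₀ hα0]
      nlinarith [mul_nonneg hα0.le hn, mul_nonneg (mul_nonneg hα0.le hn) hn]
    calc (((n+2:ℕ)):ℝ)^2 * ‖c (n+2)‖ = (((n:ℝ)+2))^2 * ‖c (n+2)‖ := by push_cast; ring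
      _ ≤ ((3/α) * (((n:ℝ)+2) + (((n:ℝ)+2)^2 - 2*((n:ℝ)+2))*α)) * ‖c (n+2)‖ :=
          mul_le_mul_of_nonneg_right key (norm_nonneg _)
      _ = (3/α) * ((((n:ℝ)+2) + (((n:ℝ)+2)^2 - 2*((n:ℝ)+2))*α) * ‖c (n+2)‖) := by ring
  have Ta := hsq a SA
  have Tb := hsq b SB
  intro z hz
  have hz1 : ‖z‖ < 1 := by simpa [mem_ball, dist_eq_norm] using hz
  -- norm bound on series terms
  have hterm : ∀ (c : ℕ → ℂ) (n : ℕ),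
      ‖(1 + (n:ℂ) * (α:ℂ)) * (((n:ℂ) + 2) * c (n + 2)) * z ^ (n + 1)‖
        ≤ (((n:ℝ)+2) + (((n:ℝ)+2)^2 - 2*((n:ℝ)+2))*α) * ‖c (n+2)‖ := by
    intro c n
    have hn : (0:ℝ) ≤ (n:ℝ) := Nat.cast_nonneg n
    have e1 : ‖(1 + (n:ℂ) * (α:ℂ))‖ = 1 + (n:ℝ)*α := by
      have : (1 + (n:ℂ) * (α:ℂ)) = (((1 + (n:ℝ)*α : ℝ)):ℂ) := by push_cast; ring
      rw [this, Complex.norm_real, Real.norm_eq_abs, _root_.abs_of_nonneg]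
      nlinarith [mul_nonneg hn hα0.le]
    have e2 : ‖((n:ℂ) + 2)‖ = (n:ℝ) + 2 := by
      have : ((n:ℂ) + 2) = ((((n:ℝ)+2 : ℝ)):ℂ) := by push_cast; ring
      rw [this, Complex.norm_real, Real.norm_eq_abs, _root_.abs_of_nonneg (by linarith)]
    calc ‖(1 + (n:ℂ) * (α:ℂ)) * (((n:ℂ) + 2) * c (n + 2)) * z ^ (n + 1)‖
        = (1 + (n:ℝ)*α) * (((n:ℝ)+2) * ‖c (n+2)‖) * ‖z‖^(n+1) := by
          rw [norm_mul, norm_mul, norm_mul, norm_pow, e1, e2]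
      _ ≤ (1 + (n:ℝ)*α) * (((n:ℝ)+2) * ‖c (n+2)‖) * 1 := by
          apply mul_le_mul_of_nonneg_left (pow_le_one₀ (norm_nonneg z) hz1.le)
          have := norm_nonneg (c (n+2))
          nlinarith [mul_nonneg hn hα0.le, mul_nonneg hn (norm_nonneg (c (n+2)))]
      _ = (((n:ℝ)+2) + (((n:ℝ)+2)^2 - 2*((n:ℝ)+2))*α) * ‖c (n+2)‖ := by ring
  have hEa := key2 (α:ℂ) a h Ta hh hz
  rw [ha1, mul_one] at hEa
  have hEb := key2 (α:ℂ) b g Tb hg hz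
  rw [hb1, mul_zero, sub_zero] at hEb
  have Sna : Summable fun n : ℕ =>
      ‖(1 + (n:ℂ) * (α:ℂ)) * (((n:ℂ) + 2) * a (n + 2)) * z ^ (n + 1)‖ :=
    Summable.of_nonneg_of_le (fun n => norm_nonneg _) (hterm a) SA
  have Snb : Summable fun n : ℕ =>
      ‖(1 + (n:ℂ) * (α:ℂ)) * (((n:ℂ) + 2) * b (n + 2)) * z ^ (n + 1)‖ :=
    Summable.of_nonneg_of_le (fun n => norm_nonneg _) (hterm b) SB
  have hna : ‖(1 - (α:ℂ)) * deriv h z + (α:ℂ) * z * deriv (deriv h) z - (1 - (α:ℂ))‖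
      ≤ ∑' n : ℕ, (((n:ℝ)+2) + (((n:ℝ)+2)^2 - 2*((n:ℝ)+2))*α) * ‖a (n+2)‖ := by
    rw [← hEa.tsum_eq]
    exact le_trans (norm_tsum_le_tsum_norm Sna) (Summable.tsum_le_tsum (hterm a) Sna SA)
  have hnb : ‖(1 - (α:ℂ)) * deriv g z + (α:ℂ) * z * deriv (deriv g) z‖
      ≤ ∑' n : ℕ, (((n:ℝ)+2) + (((n:ℝ)+2)^2 - 2*((n:ℝ)+2))*α) * ‖b (n+2)‖ := by
    rw [← hEb.tsum_eq]
    exact le_trans (norm_tsum_le_tsum_norm Snb) (Summable.tsum_le_tsum (hterm b) Snb SB)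
  have hsplit : (∑' n : ℕ, (((n:ℝ)+2) + (((n:ℝ)+2)^2 - 2*((n:ℝ)+2))*α) * (‖a (n+2)‖ + ‖b (n+2)‖))
      = (∑' n : ℕ, (((n:ℝ)+2) + (((n:ℝ)+2)^2 - 2*((n:ℝ)+2))*α) * ‖a (n+2)‖)
        + ∑' n : ℕ, (((n:ℝ)+2) + (((n:ℝ)+2)^2 - 2*((n:ℝ)+2))*α) * ‖b (n+2)‖ := by
    rw [← Summable.tsum_add SA SB]
    exact tsum_congr fun n => by ring
  rw [hsplit] at hbound
  linarith
end

section
/- Let A, B, C be real numbers with AC ≥ 0, and define Y(A,B,C) = max over z in the closed unit disk of (|A + Bz + Cz²| + 1 − |z|²). Then Y(A,B,C) = |A| + |B| + |C| if |B| ≥ 2(1 − |C|), and Y(A,B,C) = 1 + |A| + B²/(4(1 − |C|)) if |B| < 2(1 − |C|). -/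
/-!
On the circle `‖z‖ = r` the triangle inequality bounds `‖A + Bz + Cz²‖ + 1 - r²` by
`|A| + 1 + |B| r - (1 - |C|) r²`, and since `AC ≥ 0` this bound is attained at a real point
`z = ±r`, where the signs of `A`, `±B r` and `C r²` agree. So the maximum over the disk is the
maximum of this quadratic in `r` over `[0, 1]`: at `r = 1` when its vertex `|B| / (2 (1 - |C|))`
lies beyond `1`, and at the vertex otherwise.
-/

open Set

lemma norm_add_mul_add_mul_sq_le {R : Type*} [SeminormedRing R] (a b c z : R) :
    ‖a + b * z + c * z ^ 2‖ ≤ ‖a‖ + ‖b‖ * ‖z‖ + ‖c‖ * ‖z‖ ^ 2 := by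
  have hb : ‖b * z‖ ≤ ‖b‖ * ‖z‖ := norm_mul_le b z
  have hc : ‖c * z ^ 2‖ ≤ ‖c‖ * ‖z‖ ^ 2 :=
    (norm_mul_le c _).trans (by gcongr; exact norm_pow_le' z two_pos)
  calc ‖a + b * z + c * z ^ 2‖ ≤ ‖a‖ + ‖b * z‖ + ‖c * z ^ 2‖ := norm_add₃_le
    _ ≤ _ := by gcongr

lemma exists_abs_eq_one_mul_eq_abs {a c : ℝ} (hac : 0 ≤ a * c) :
    ∃ s : ℝ, |s| = 1 ∧ s * a = |a| ∧ s * c = |c| := by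
  by_cases h : 0 ≤ a + c
  · have ha : 0 ≤ a := by nlinarith
    have hc : 0 ≤ c := by nlinarith
    exact ⟨1, abs_one, by simp [abs_of_nonneg ha], by simp [abs_of_nonneg hc]⟩
  · have ha : a ≤ 0 := by nlinarith
    have hc : c ≤ 0 := by nlinarith
    exact ⟨-1, by simp, by simp [abs_of_nonpos ha], by simp [abs_of_nonpos hc]⟩

lemma exists_abs_eq_one_abs_quadratic_eq {a b c : ℝ} (hac : 0 ≤ a * c) :
    ∃ ε : ℝ, |ε| = 1 ∧ ∀ r, 0 ≤ r →
      |a + b * (ε * r) + c * (ε * r) ^ 2| = |a| + |b| * r + |c| * r ^ 2 := by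
  obtain ⟨s, hs, hsa, hsc⟩ := exists_abs_eq_one_mul_eq_abs hac
  obtain ⟨t, ht, htb, -⟩ := exists_abs_eq_one_mul_eq_abs (mul_self_nonneg b)
  have hs2 : s ^ 2 = 1 := by rw [← sq_abs, hs, one_pow]
  have ht2 : t ^ 2 = 1 := by rw [← sq_abs, ht, one_pow]
  refine ⟨s * t, by rw [abs_mul, hs, ht, one_mul], fun r hr => ?_⟩
  have hsigned : s * (a + b * (s * t * r) + c * (s * t * r) ^ 2) = |a| + |b| * r + |c| * r ^ 2 :=
    calc _ = s * a + s ^ 2 * (t * b) * r + s ^ 2 * t ^ 2 * (s * c) * r ^ 2 := by ring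
      _ = _ := by rw [hs2, ht2, hsa, htb, hsc]; ring
  rw [← one_mul |_|, ← hs, ← abs_mul, hsigned, abs_of_nonneg (by positivity)]

lemma mul_sub_mul_sq_le_sq_div {d : ℝ} (hd : 0 < d) (b r : ℝ) :
    b * r - d * r ^ 2 ≤ b ^ 2 / (4 * d) := by
  rw [le_div_iff₀ (by positivity)]
  nlinarith [sq_nonneg (b - 2 * d * r)]

lemma mul_sub_mul_sq_eq_sq_div_at_vertex {d : ℝ} (hd : d ≠ 0) (b : ℝ) :
    b * (b / (2 * d)) - d * (b / (2 * d)) ^ 2 = b ^ 2 / (4 * d) := by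
  field_simp
  ring

-- `b - d - (b r - d r²) = (1 - r) (b - d (1 + r))`, and `d (1 + r) ≤ max (2 d) 0 ≤ b`.
lemma mul_sub_mul_sq_le_of_two_mul_le {b d r : ℝ} (hb : 0 ≤ b) (h : 2 * d ≤ b)
    (hr0 : 0 ≤ r) (hr1 : r ≤ 1) : b * r - d * r ^ 2 ≤ b - d := by
  rcases le_total 0 d with hd | hd
  · nlinarith [mul_nonneg (sub_nonneg.2 hr1) (mul_nonneg hd (sub_nonneg.2 hr1))]
  · nlinarith [mul_nonneg hb (sub_nonneg.2 hr1),
      mul_nonneg (neg_nonneg.2 hd) (mul_nonneg (sub_nonneg.2 hr1) (by linarith : (0:ℝ) ≤ 1 + r))]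

def diskValues (A B C : ℝ) : Set ℝ :=
  {y | ∃ z : ℂ, ‖z‖ ≤ 1 ∧ y = ‖(A : ℂ) + (B : ℂ) * z + (C : ℂ) * z ^ 2‖ + 1 - ‖z‖ ^ 2}

def radialMax (A B C r : ℝ) : ℝ :=
  |A| + 1 + (|B| * r - (1 - |C|) * r ^ 2)

lemma le_radialMax_of_mem_diskValues {A B C y : ℝ} (hy : y ∈ diskValues A B C) :
    ∃ r ∈ Icc (0 : ℝ) 1, y ≤ radialMax A B C r := by
  obtain ⟨z, hz, rfl⟩ := hy
  refine ⟨‖z‖, ⟨norm_nonneg z, hz⟩, ?_⟩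
  have := norm_add_mul_add_mul_sq_le (A : ℂ) B C z
  simp only [Complex.norm_real, Real.norm_eq_abs] at this
  unfold radialMax
  linarith

lemma radialMax_mem_diskValues {A B C r : ℝ} (hAC : 0 ≤ A * C) (hr : r ∈ Icc (0 : ℝ) 1) :
    radialMax A B C r ∈ diskValues A B C := by
  obtain ⟨ε, hε, halign⟩ := exists_abs_eq_one_abs_quadratic_eq (b := B) hAC
  have hεr : ‖((ε * r : ℝ) : ℂ)‖ = r := by
    rw [Complex.norm_real, Real.norm_eq_abs, abs_mul, hε, one_mul, abs_of_nonneg hr.1]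
  refine ⟨(ε * r : ℝ), hεr.le.trans hr.2, ?_⟩
  have hcast : (A : ℂ) + B * ((ε * r : ℝ) : ℂ) + C * ((ε * r : ℝ) : ℂ) ^ 2
      = ((A + B * (ε * r) + C * (ε * r) ^ 2 : ℝ) : ℂ) := by
    push_cast
    ring
  rw [hεr, hcast, Complex.norm_real, Real.norm_eq_abs, halign r hr.1, radialMax]
  ring

theorem stmt_13 (A B C : ℝ) (hAC : 0 ≤ A * C) :
    (|B| ≥ 2 * (1 - |C|) →
      IsGreatest {y : ℝ | ∃ z : ℂ, ‖z‖ ≤ 1 ∧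
        y = ‖(A : ℂ) + (B : ℂ) * z + (C : ℂ) * z ^ 2‖ + 1 - ‖z‖^2}
        (|A| + |B| + |C|)) ∧
    (|B| < 2 * (1 - |C|) →
      IsGreatest {y : ℝ | ∃ z : ℂ, ‖z‖ ≤ 1 ∧
        y = ‖(A : ℂ) + (B : ℂ) * z + (C : ℂ) * z ^ 2‖ + 1 - ‖z‖^2}
        (1 + |A| + B^2 / (4 * (1 - |C|)))) := by
  change (_ → IsGreatest (diskValues A B C) _) ∧ (_ → IsGreatest (diskValues A B C) _)
  refine ⟨fun hB => ⟨?_, fun y hy => ?_⟩, fun hB => ?_⟩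
  · convert radialMax_mem_diskValues (B := B) hAC (right_mem_Icc.2 zero_le_one) using 1
    simp only [radialMax]
    ring
  · obtain ⟨r, ⟨hr0, hr1⟩, hy⟩ := le_radialMax_of_mem_diskValues hy
    have := mul_sub_mul_sq_le_of_two_mul_le (abs_nonneg B) hB hr0 hr1
    simp only [radialMax] at hy
    linarith
  have hd : 0 < 1 - |C| := by linarith [abs_nonneg B]
  refine ⟨?_, fun y hy => ?_⟩
  · have hvertex : |B| / (2 * (1 - |C|)) ∈ Icc (0 : ℝ) 1 :=
      ⟨by positivity, (div_le_one (by positivity)).2 hB.le⟩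
    convert radialMax_mem_diskValues hAC hvertex using 1
    rw [radialMax, mul_sub_mul_sq_eq_sq_div_at_vertex hd.ne', sq_abs]
    ring
  · obtain ⟨r, -, hy⟩ := le_radialMax_of_mem_diskValues hy
    have := mul_sub_mul_sq_le_sq_div hd |B| r
    rw [sq_abs] at this
    simp only [radialMax] at hy
    linarith
end

section
/- For all M > 0 and all t ∈ (0,1), the inequality 21M²t² − (213M² − 72M + 12)t + (192M² − 72M + 12) ≥ 0 holds. -/
theorem hankel_quadratic_eq_one_sub_mul (M t : ℝ) :
    21 * M^2 * t^2 - (213 * M^2 - 72 * M + 12) * t + (192 * M^2 - 72 * M + 12) =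
      (1 - t) * (192 * M^2 - 72 * M + 12 - 21 * M^2 * t) := by
  ring

-- At `t = 1` the cofactor is `171 M² - 72 M + 12 = (9/19) (19 M - 4)² + 84/19`.
theorem hankel_cofactor_pos (M : ℝ) {t : ℝ} (ht : t ≤ 1) :
    0 < 192 * M^2 - 72 * M + 12 - 21 * M^2 * t := by
  nlinarith [sq_nonneg (19 * M - 4), mul_nonneg (sq_nonneg M) (sub_nonneg.2 ht)]

theorem stmt_14_general (M t : ℝ) (ht : t ∈ Set.Ioo (0:ℝ) 1) :
    0 ≤ 21 * M^2 * t^2 - (213 * M^2 - 72 * M + 12) * t + (192 * M^2 - 72 * M + 12) := by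
  rw [hankel_quadratic_eq_one_sub_mul]
  exact mul_nonneg (sub_nonneg.2 ht.2.le) (hankel_cofactor_pos M ht.2.le).le

theorem stmt_14 (M t : ℝ) (hM : 0 < M) (ht : t ∈ Set.Ioo (0:ℝ) 1) :
    0 ≤ 21 * M^2 * t^2 - (213 * M^2 - 72 * M + 12) * t + (192 * M^2 - 72 * M + 12) :=
  stmt_14_general M t ht
end
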